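/- Let A be a real (N-1)×N matrix with rank N-1 and A·1 = 0. For each n, let Ā_n denote A with its n-th column removed and a_n the n-th column of A. Then Ā_n is invertible and every entry of the vector Ā_n⁻¹ · a_n equals -1, i.e., -Ā_n⁻¹ a_n is the all-ones vector. -/
import Mathlib

lemma vecMul_inj_of_rank (N M : ℕ) (A : Matrix (Fin N) (Fin M) ℝ)
    (hrank : A.rank = N) : Function.Injective (fun x => Matrix.vecMul x A) := by
  have h : Function.Injective A.vecMul := by
    rw [Matrix.vecMul_injective_iff, linearIndependent_iff_card_eq_finrank_span]
    rw [Matrix.rank_eq_finrank_span_row] at hrank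
    rw [Set.finrank, hrank, Fintype.card_fin]
  exact h

/-- If a real `N×(N+1)` matrix `A` has rank `N` and each row sums to zero, then for
every column index `n`, the matrix `Ā_n` obtained by deleting column `n` is invertible
and every entry of `Ā_n⁻¹ · a_n` equals `-1`, where `a_n` is the `n`-th column of `A`. -/
theorem stmt_1 (N : ℕ) (hN : 1 ≤ N) (A : Matrix (Fin N) (Fin (N + 1)) ℝ)
    (hrank : A.rank = N) (hsum : ∀ i, ∑ j, A i j = 0) (n : Fin (N + 1)) :
    IsUnit (A.submatrix id n.succAbove) ∧
      ∀ i : Fin N, ((A.submatrix id n.succAbove)⁻¹.mulVec (fun i => A i n)) i = -1 := by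
  set B := A.submatrix id n.succAbove with hBdef
  -- injectivity of x ↦ x ᵥ* A
  have hAinj : Function.Injective (fun x => Matrix.vecMul x A) :=
    vecMul_inj_of_rank N (N+1) A hrank
  have hBinj : Function.Injective (fun x => Matrix.vecMul x B) := by
    intro x y hxy
    apply hAinj
    have hxy' : ∀ i, Matrix.vecMul x B i = Matrix.vecMul y B i := fun i => congrFun hxy i
    simp only
    funext j
    have hsumx : ∀ z : Fin N → ℝ, ∑ j, Matrix.vecMul z A j = 0 := by
      intro z
      simp only [Matrix.vecMul, dotProduct]
      rw [Finset.sum_comm]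
      simp_rw [← Finset.mul_sum, hsum, mul_zero]
      simp
    rcases eq_or_ne j n with rfl | hj
    · have hx := hsumx x
      have hy := hsumx y
      rw [Fin.sum_univ_succAbove _ j] at hx hy
      have : ∀ i, Matrix.vecMul x A (j.succAbove i) = Matrix.vecMul y A (j.succAbove i) := by
        intro i
        have := hxy' i
        simpa [hBdef, Matrix.vecMul, dotProduct, Matrix.submatrix] using this
      have hs : ∑ i, Matrix.vecMul x A (j.succAbove i) = ∑ i, Matrix.vecMul y A (j.succAbove i) :=
        Finset.sum_congr rfl fun i _ => this i
      linarith
    · obtain ⟨i, rfl⟩ := Fin.exists_succAbove_eq hj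
      have := hxy' i
      simpa [hBdef, Matrix.vecMul, dotProduct, Matrix.submatrix] using this
  have hB : IsUnit B := Matrix.vecMul_injective_iff_isUnit.mp hBinj
  refine ⟨hB, ?_⟩
  -- B.mulVec (-1) = a_n
  have key : B.mulVec (fun _ => (-1 : ℝ)) = fun i => A i n := by
    funext i
    have := hsum i
    rw [Fin.sum_univ_succAbove _ n] at this
    simp only [Matrix.mulVec, dotProduct, hBdef, Matrix.submatrix_apply, id_eq,
      mul_neg_one]
    simp only [Finset.sum_neg_distrib]
    linarith
  intro i
  have : B⁻¹.mulVec (B.mulVec (fun _ => (-1:ℝ))) = fun _ => (-1:ℝ) := by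
    rw [Matrix.mulVec_mulVec, Matrix.nonsing_inv_mul _ ((Matrix.isUnit_iff_isUnit_det B).mp hB),
      Matrix.one_mulVec]
  rw [← key]
  exact congrFun this i
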